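/- arXiv:2006.12354 — 2 statements merged into one kernel-verified Lean document; each statement's English description precedes it below -/
import Mathlib

section
/- For fixed x₀ > 0, the function q₁(x) = -(ln x - ln x₀)/(x - x₀) (for x ≠ x₀, extended continuously at x₀) is concave on (0,∞): q₁''(x) ≤ 0 for all x > 0, x ≠ x₀. -/
/-!
Write `u = (x - x₀) / x`, so that `log x - log x₀ = -log (1 - u)`. A direct computation gives
`q₁'' x = -R x / (x - x₀) ^ 3` with `R x = -2 log (1 - u) - 2 u - u ^ 2`, the remainder of the
second-order Taylor expansion of `-2 log (1 - u)`. Since `R' x = 2 (x - x₀) ^ 2 / x ^ 3 ≥ 0` and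
`R x₀ = 0`, the remainder `R x` has the sign of `x - x₀`, hence `q₁'' x ≤ 0`.
-/

open Real Set Filter Topology

namespace LogSlope

variable {a y : ℝ}

noncomputable def deriv₁ (a y : ℝ) : ℝ := ((log y - log a) - (y - a) / y) / (y - a) ^ 2

noncomputable def remainder (a y : ℝ) : ℝ :=
  2 * (log y - log a) - (y - a) ^ 2 / y ^ 2 - 2 * (y - a) / y

theorem hasDerivAt_neg_div (hy : 0 < y) (hya : y ≠ a) :
    HasDerivAt (fun y => -(log y - log a) / (y - a)) (deriv₁ a y) y := by
  have hlog := ((hasDerivAt_log hy.ne').sub_const (log a)).neg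
  refine (hlog.div ((hasDerivAt_id y).sub_const a) (sub_ne_zero.mpr hya)).congr_deriv ?_
  simp only [deriv₁, id, Pi.neg_apply]
  field_simp
  ring

theorem hasDerivAt_deriv₁ (hy : 0 < y) (hya : y ≠ a) :
    HasDerivAt (deriv₁ a) (-remainder a y / (y - a) ^ 3) y := by
  have hlog := (hasDerivAt_log hy.ne').sub_const (log a)
  have hu := ((hasDerivAt_id y).sub_const a).div (hasDerivAt_id y) hy.ne'
  have hden := ((hasDerivAt_id y).sub_const a).pow 2
  refine ((hlog.sub hu).div hden (pow_ne_zero 2 (sub_ne_zero.mpr hya))).congr_deriv ?_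
  have : y - a ≠ 0 := sub_ne_zero.mpr hya
  simp only [remainder, id, Pi.sub_apply, Pi.div_apply, Pi.pow_apply]
  field_simp
  ring

theorem hasDerivAt_remainder (hy : 0 < y) :
    HasDerivAt (remainder a) (2 * (y - a) ^ 2 / y ^ 3) y := by
  have hlog := ((hasDerivAt_log hy.ne').sub_const (log a)).const_mul 2
  have hsq := (((hasDerivAt_id y).sub_const a).pow 2).div ((hasDerivAt_id y).pow 2)
    (pow_ne_zero 2 hy.ne')
  have hu := (((hasDerivAt_id y).sub_const a).const_mul 2).div (hasDerivAt_id y) hy.ne'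
  refine ((hlog.sub hsq).sub hu).congr_deriv ?_
  simp only [id, Pi.pow_apply]
  field_simp
  ring

theorem monotoneOn_remainder : MonotoneOn (remainder a) (Ioi 0) := by
  refine monotoneOn_of_hasDerivWithinAt_nonneg (convex_Ioi 0)
    (fun y hy => (hasDerivAt_remainder hy).continuousAt.continuousWithinAt)
    (fun y hy => (hasDerivAt_remainder (interior_subset hy)).hasDerivWithinAt) ?_
  intro y hy
  have hy : 0 < y := interior_subset hy
  positivity

theorem remainder_self : remainder a a = 0 := by simp [remainder]

theorem remainder_div_pow_three_nonneg (ha : 0 < a) (hy : 0 < y) :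
    0 ≤ remainder a y / (y - a) ^ 3 := by
  rcases le_total y a with hle | hle
  · have hR : remainder a y ≤ 0 := remainder_self (a := a) ▸ monotoneOn_remainder hy ha hle
    exact div_nonneg_of_nonpos hR (Odd.pow_nonpos (by decide) (sub_nonpos.mpr hle))
  · have hR : 0 ≤ remainder a y := remainder_self (a := a) ▸ monotoneOn_remainder ha hy hle
    exact div_nonneg hR (pow_nonneg (sub_nonneg.mpr hle) 3)

theorem deriv_deriv_neg_div (hy : 0 < y) (hya : y ≠ a) :
    deriv (deriv fun y => -(log y - log a) / (y - a)) y = -remainder a y / (y - a) ^ 3 := by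
  have hU : Ioi 0 \ {a} ∈ 𝓝 y :=
    (isOpen_Ioi.sdiff isClosed_singleton).mem_nhds ⟨hy, hya⟩
  have hderiv : deriv (fun y => -(log y - log a) / (y - a)) =ᶠ[𝓝 y] deriv₁ a :=
    eventually_of_mem hU fun z hz => (hasDerivAt_neg_div hz.1 hz.2).deriv
  rw [hderiv.deriv_eq]
  exact (hasDerivAt_deriv₁ hy hya).deriv

end LogSlope

theorem stmt3 (x₀ : ℝ) (hx₀ : 0 < x₀)
    (q₁ : ℝ → ℝ)
    (hq₁ : q₁ = fun x => if x = x₀ then -(1 / x₀)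
      else -(Real.log x - Real.log x₀) / (x - x₀)) :
    ∀ x : ℝ, 0 < x → x ≠ x₀ → deriv (deriv q₁) x ≤ 0 := by
  intro x hx hne
  have hq : q₁ =ᶠ[𝓝 x] fun y => -(log y - log x₀) / (y - x₀) := by
    filter_upwards [isOpen_compl_singleton.mem_nhds hne] with y hy
    simp only [hq₁, if_neg (show y ≠ x₀ from hy)]
  rw [hq.deriv.deriv_eq, LogSlope.deriv_deriv_neg_div hx hne, neg_div]
  exact neg_nonpos.mpr (LogSlope.remainder_div_pow_three_nonneg hx₀ hx)
end

section
/- For fixed x₀ > 0 and fixed y > 0, the difference quotient x ↦ (q₁(y) - q₁(x))/(y - x) is a decreasing function of x on (0,∞) (for x ≠ y), where q₁(x) = -(ln x - ln x₀)/(x - x₀). -/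
/-!
Writing `u = t * x + (1 - t) * x₀`, one has `(log x - log x₀) / (x - x₀) = ∫₀¹ u⁻¹ dt`, also at
`x = x₀`, where both sides are `x₀⁻¹`. For each `t ∈ [0, 1]` the integrand is the convex function
`u ↦ u⁻¹` composed with a map that is affine in `x` and positive on `(0, ∞)`, so the integral is
convex in `x` and `q₁` is concave on `(0, ∞)`. The secant slopes of a concave function through a
fixed point are antitone.
-/

open Set MeasureTheory intervalIntegral

lemma convexOn_intervalIntegral {E : Type*} [AddCommGroup E] [Module ℝ E] {s : Set E}
    {f : ℝ → E → ℝ} {a b : ℝ} (hab : a ≤ b) (hf : ∀ t ∈ Icc a b, ConvexOn ℝ s (f t))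
    (hint : ∀ x ∈ s, IntervalIntegrable (fun t => f t x) volume a b) :
    ConvexOn ℝ s fun x => ∫ t in a..b, f t x := by
  refine ⟨(hf a ⟨le_rfl, hab⟩).1, fun u hu v hv θ η hθ hη hθη => ?_⟩
  have hu' := (hint u hu).const_mul θ
  have hv' := (hint v hv).const_mul η
  calc ∫ t in a..b, f t (θ • u + η • v)
      ≤ ∫ t in a..b, (θ * f t u + η * f t v) :=
        integral_mono_on hab (hint _ ((hf a ⟨le_rfl, hab⟩).1 hu hv hθ hη hθη)) (hu'.add hv')
          fun t ht => (hf t ht).2 hu hv hθ hη hθη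
    _ = θ • (∫ t in a..b, f t u) + η • ∫ t in a..b, f t v := by
        rw [integral_add hu' hv', intervalIntegral.integral_const_mul,
          intervalIntegral.integral_const_mul, smul_eq_mul, smul_eq_mul]

lemma convexOn_inv_mul_add {s : Set ℝ} {a b : ℝ} (hs : Convex ℝ s)
    (hpos : ∀ x ∈ s, 0 < a * x + b) : ConvexOn ℝ s fun x => (a * x + b)⁻¹ := by
  refine ⟨hs, fun u hu v hv θ η hθ hη hθη => ?_⟩
  have key := (convexOn_zpow (𝕜 := ℝ) (-1)).2 (hpos u hu) (hpos v hv) hθ hη hθη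
  have hcomb : a * (θ * u + η * v) + b = θ * (a * u + b) + η * (a * v + b) := by
    linear_combination (-b) * hθη
  simp only [smul_eq_mul, zpow_neg_one] at key ⊢
  rwa [hcomb]

lemma mul_add_one_sub_mul_pos {x y t : ℝ} (hx : 0 < x) (hy : 0 < y) (ht : t ∈ Icc (0 : ℝ) 1) :
    0 < t * x + (1 - t) * y :=
  convex_Ioi (0 : ℝ) hx hy ht.1 (sub_nonneg.2 ht.2) (add_sub_cancel t 1)

lemma intervalIntegrable_inv_mul_add_one_sub_mul {x y : ℝ} (hx : 0 < x) (hy : 0 < y) :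
    IntervalIntegrable (fun t => (t * x + (1 - t) * y)⁻¹) volume 0 1 := by
  refine ContinuousOn.intervalIntegrable ?_
  rw [uIcc_of_le zero_le_one]
  exact ContinuousOn.inv₀ (by fun_prop) fun t ht => (mul_add_one_sub_mul_pos hx hy ht).ne'

lemma convexOn_integral_inv_mul_add_one_sub_mul {y : ℝ} (hy : 0 < y) :
    ConvexOn ℝ (Ioi 0) fun x => ∫ t in (0 : ℝ)..1, (t * x + (1 - t) * y)⁻¹ :=
  convexOn_intervalIntegral zero_le_one
    (fun _ ht => convexOn_inv_mul_add (convex_Ioi 0) fun _ hx => mul_add_one_sub_mul_pos hx hy ht)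
    fun _ hx => intervalIntegrable_inv_mul_add_one_sub_mul hx hy

lemma integral_inv_mul_add_one_sub_mul {x y : ℝ} (hx : 0 < x) (hy : 0 < y) (hxy : x ≠ y) :
    ∫ t in (0 : ℝ)..1, (t * x + (1 - t) * y)⁻¹ = (Real.log x - Real.log y) / (x - y) := by
  have hxy' : x - y ≠ 0 := sub_ne_zero.2 hxy
  calc ∫ t in (0 : ℝ)..1, (t * x + (1 - t) * y)⁻¹
      = ∫ t in (0 : ℝ)..1, ((x - y) * t + y)⁻¹ := by congr 1; ext t; ring_nf
    _ = (x - y)⁻¹ * Real.log (x / y) := by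
        rw [integral_comp_mul_add (fun u => u⁻¹) hxy', mul_zero, zero_add, mul_one,
          sub_add_cancel, integral_inv_of_pos hy hx, smul_eq_mul]
    _ = (Real.log x - Real.log y) / (x - y) := by
        rw [Real.log_div hx.ne' hy.ne', inv_mul_eq_div]

theorem stmt4 (x₀ y : ℝ) (hx₀ : 0 < x₀) (hy : 0 < y)
    (q₁ : ℝ → ℝ)
    (hq₁ : q₁ = fun x => if x = x₀ then -(1 / x₀)
      else -(Real.log x - Real.log x₀) / (x - x₀)) :
    ∀ x₁ x₂ : ℝ, 0 < x₁ → x₁ < x₂ → x₁ ≠ y → x₂ ≠ y →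
      (q₁ y - q₁ x₁) / (y - x₁) ≥ (q₁ y - q₁ x₂) / (y - x₂) := by
  intro x₁ x₂ hx₁ hx₁₂ h₁ h₂
  have hconcave : ConcaveOn ℝ (Ioi 0) q₁ := by
    refine (convexOn_integral_inv_mul_add_one_sub_mul hx₀).neg.congr fun x (hx : 0 < x) => ?_
    by_cases hxx₀ : x = x₀
    · simp [hq₁, hxx₀, ← add_mul]
    · simp only [Pi.neg_apply, hq₁, if_neg hxx₀, integral_inv_mul_add_one_sub_mul hx hx₀ hxx₀,
        neg_div]
  have hanti := hconcave.slope_anti (mem_Ioi.2 hy) ⟨mem_Ioi.2 hx₁, h₁⟩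
    ⟨mem_Ioi.2 (hx₁.trans hx₁₂), h₂⟩ hx₁₂.le
  simpa only [slope_comm q₁ y, slope_def_field] using hanti
end
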